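/- Let q ≡ 1 (mod 8) be a prime power, let γ ∈ C_2^4, let R ⊆ C_0^4 be a set of coset representatives for the quotient C_0^4/{1,−1} (so |R| = (q−1)/8 and C_0^4 is the disjoint union of the pairs {i,−i}, i ∈ R), and for i ∈ R set D_i = {i, −i, γi, −γi}. Suppose that one of 1−γ and 1+γ lies in C_0^4 while the other lies in C_2^4. Then the sets D_i are pairwise disjoint with ∪_{i∈R} D_i = C_0^2, the family D = {D_i : i ∈ R} is a (q,(q−1)/8,4;3,0)-DPDF relative to C_0^2 (i.e., Σ_{i∈R} Δ(D_i) = 3·C_0^2 as multisets) and a (q,(q−1)/8,4;(q−17)/4,(q−1)/4)-EPDF relative to C_0^2; since C_0^2 = ∪_{i∈R} D_i, these are a standard DPDF and EPDF partitioning C_0^2. -/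

import Mathlib

open Finset

section Defs

variable {G : Type*} [AddCommGroup G] [Fintype G] [DecidableEq G]

/-- The multiset `Δ(D)` of internal differences `x - y` (for `x ≠ y` in `D`). -/
def intDiff (D : Finset G) : Multiset G :=
  ((D ×ˢ D).filter (fun p => p.1 ≠ p.2)).val.map (fun p => p.1 - p.2)

/-- The multiset `Δ(D, E)` of external differences `x - y` for `x ∈ D`, `y ∈ E`. -/
def extDiff (D E : Finset G) : Multiset G :=
  (D ×ˢ E).val.map (fun p => p.1 - p.2)

/-- The finset `G^*` of nonzero elements of `G`. -/
def Gstar (G : Type*) [AddCommGroup G] [Fintype G] [DecidableEq G] : Finset G :=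
  Finset.univ.erase 0

/-- `A` is a `(v, k, lam, mu)` partial difference set in `G`:
`Δ(A) = lam • A^* + mu • (G^* \ A)`. -/
def IsPDS (A : Finset G) (v k lam mu : ℕ) : Prop :=
  Fintype.card G = v ∧ A.card = k ∧
    intDiff A = lam • (A.erase 0).val + mu • (Gstar G \ A).val

/-- `D` is a `(v, k, lam, mu)` skew partial difference set corresponding to the
`(v, k, lam, mu)`-PDS `A`: `Δ(D) = lam • A^* + mu • (G^* \ A)`. -/
def IsSkewPDS (D A : Finset G) (v k lam mu : ℕ) : Prop :=
  IsPDS A v k lam mu ∧ D.card = k ∧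
    intDiff D = lam • (A.erase 0).val + mu • (Gstar G \ A).val

/-- `D` is an `(n, m, k₁, …, k_m; lam, mu)` disjoint partial difference family relative
to `T`: the `D i` are pairwise disjoint subsets of `G^*` of sizes `k i`, and
`∑ i, Δ(D i) = lam • T + mu • (G^* \ T)`. -/
def IsDPDF {ι : Type*} [Fintype ι] (D : ι → Finset G) (n m : ℕ) (k : ι → ℕ)
    (T : Finset G) (lam mu : ℕ) : Prop :=
  Fintype.card G = n ∧ Fintype.card ι = m ∧
    (∀ i, (0 : G) ∉ D i) ∧ (∀ i, (D i).card = k i) ∧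
    (Pairwise (fun i j => Disjoint (D i) (D j))) ∧
    ∑ i, intDiff (D i) = lam • T.val + mu • (Gstar G \ T).val

/-- `D` is an `(n, m, k₁, …, k_m; lam, mu)` external partial difference family relative
to `T`: the `D i` are pairwise disjoint subsets of `G^*` of sizes `k i`, and
`∑_{i ≠ j}, Δ(D i, D j) = lam • T + mu • (G^* \ T)`. -/
def IsEPDF {ι : Type*} [Fintype ι] [DecidableEq ι] (D : ι → Finset G) (n m : ℕ)
    (k : ι → ℕ) (T : Finset G) (lam mu : ℕ) : Prop :=
  Fintype.card G = n ∧ Fintype.card ι = m ∧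
    (∀ i, (0 : G) ∉ D i) ∧ (∀ i, (D i).card = k i) ∧
    (Pairwise (fun i j => Disjoint (D i) (D j))) ∧
    ∑ i, ∑ j ∈ Finset.univ.erase i, extDiff (D i) (D j)
      = lam • T.val + mu • (Gstar G \ T).val

/-- `D` is an `(n, m, k₁, …, k_m, lam)` disjoint difference family:
`∑ i, Δ(D i) = lam • G^*`. -/
def IsDDF {ι : Type*} [Fintype ι] (D : ι → Finset G) (n m : ℕ) (k : ι → ℕ)
    (lam : ℕ) : Prop :=
  Fintype.card G = n ∧ Fintype.card ι = m ∧
    (∀ i, (0 : G) ∉ D i) ∧ (∀ i, (D i).card = k i) ∧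
    (Pairwise (fun i j => Disjoint (D i) (D j))) ∧
    ∑ i, intDiff (D i) = lam • (Gstar G).val

/-- `D` is an `(n, m, k₁, …, k_m, lam)` external difference family:
`∑_{i ≠ j}, Δ(D i, D j) = lam • G^*`. -/
def IsEDF {ι : Type*} [Fintype ι] [DecidableEq ι] (D : ι → Finset G) (n m : ℕ)
    (k : ι → ℕ) (lam : ℕ) : Prop :=
  Fintype.card G = n ∧ Fintype.card ι = m ∧
    (∀ i, (0 : G) ∉ D i) ∧ (∀ i, (D i).card = k i) ∧
    (Pairwise (fun i j => Disjoint (D i) (D j))) ∧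
    ∑ i, ∑ j ∈ Finset.univ.erase i, extDiff (D i) (D j) = lam • (Gstar G).val

end Defs

section Cyclotomy

variable {F : Type*} [Field F] [Fintype F] [DecidableEq F]

/-- The cyclotomic class `C_i^e = α^i ⟨α^e⟩` of order `e` in the finite field `F`,
with respect to the primitive element `α`.  (Since `α` has multiplicative order at most
`|F| - 1`, letting `j` range over `0, …, |F| - 1` captures the whole class.) -/
def cycClass (α : F) (e i : ℕ) : Finset F :=
  (Finset.range (Fintype.card F)).image (fun j => α ^ (e * j + i))

/-- `α` is a primitive element of the finite field `F`: every nonzero element of `F`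
is a power of `α`. -/
def IsPrimitiveElt (α : F) : Prop :=
  ∀ x : F, x ≠ 0 → ∃ n : ℕ, α ^ n = x

end Cyclotomy

/-- The family `{D_i : i ∈ R}` where `D_i = {i, -i, γi, -γi}`, indexed by the elements
of the finset `R`. -/
def quadFam {F : Type*} [Field F] [Fintype F] [DecidableEq F] (γ : F) (R : Finset F) :
    {x : F // x ∈ R} → Finset F :=
  fun i => {(i : F), -(i : F), γ * (i : F), -(γ * (i : F))}

/-!
Put `m = (q - 1) / 4`. Since `α` generates `F^*`, the classes `C_0^4` and `C_2^4` are the solution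
sets of `x^m = 1` and `x^m = -1`, and `C_0^2`, the set of nonzero squares, is their union.

Each element of `D_i = {±i, ±γi}` lies in `C_0^4` or in `C_2^4`, and removing the factor `γ`
from the latter gives back `±i`. Because `R` picks one element from each pair `{x, -x}` in
`C_0^4`, the `D_i` are disjoint and cover `C_0^2`. The internal differences of `D_i` are `±2i`,
`±2γi` and, twice each, `±(1-γ)i` and `±(1+γ)i`. Summed over `i ∈ R`, the pairs `±ci` run
through `c C_0^4`, which is `C_0^4` or `C_2^4` according as `c^m = 1` or `-1`. As `2` is a
square (`q ≡ 1 mod 8`) and `γ ∈ C_2^4`, the coefficients `2` and `2γ` lie in different quartic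
classes, and by hypothesis so do `1 - γ` and `1 + γ`. Hence `∑ Δ(D_i) = 3 C_0^2`.

The external differences are what `∑ Δ(D_i)` leaves of `Δ(C_0^2)`. By the Paley count, which
rests on the Jacobi sum `∑_y χ(y) χ(y + d) = -1` of the quadratic character, `Δ(C_0^2)`
consists of `(q-5)/4` copies of `C_0^2` and `(q-1)/4` copies of the nonsquares. Comparing
multiplicities at `1` also gives `3 ≤ (q-5)/4`, that is, `q ≥ 17`.
-/

open Polynomial (nthRootsFinset mem_nthRootsFinset)

section DifferenceMultisets

variable {G : Type*} [AddCommGroup G]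

def pmPair (x : G) : Multiset G := {x, -x}

theorem pmPair_neg (x : G) : pmPair (-x) = pmPair x := by
  simp only [pmPair, neg_neg]
  exact Multiset.pair_comm _ _

variable [DecidableEq G]

theorem count_intDiff (D : Finset G) (d : G) :
    (intDiff D).count d = ∑ x ∈ D, ∑ y ∈ D, if x ≠ y ∧ d = x - y then 1 else 0 := by
  rw [intDiff, Multiset.count_map, ← Finset.filter_val, Finset.filter_filter, Finset.card_val,
    Finset.card_filter, Finset.sum_product]

theorem count_extDiff (D E : Finset G) (d : G) :
    (extDiff D E).count d = ∑ x ∈ D, ∑ y ∈ E, if d = x - y then 1 else 0 := by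
  rw [extDiff, Multiset.count_map, ← Finset.filter_val, Finset.card_val, Finset.card_filter,
    Finset.sum_product]

theorem count_intDiff_of_ne_zero (D : Finset G) {d : G} (hd : d ≠ 0) :
    (intDiff D).count d = #(D.filter fun y => y + d ∈ D) := by
  rw [count_intDiff, Finset.sum_comm, Finset.card_filter]
  refine Finset.sum_congr rfl fun y _ => ?_
  have key : ∀ x, (x ≠ y ∧ d = x - y) ↔ x = y + d := fun x => by
    constructor
    · rintro ⟨-, rfl⟩; abel
    · rintro rfl; exact ⟨by simpa using hd, by abel⟩
  simp_rw [key, Finset.sum_ite_eq']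

theorem zero_notMem_intDiff (D : Finset G) : (0 : G) ∉ intDiff D := by
  simp [intDiff, sub_eq_zero]

theorem intDiff_biUnion {ι : Type*} [Fintype ι] [DecidableEq ι] (D : ι → Finset G)
    (hD : Pairwise fun i j => Disjoint (D i) (D j)) :
    intDiff (Finset.univ.biUnion D) =
      ∑ i, intDiff (D i) + ∑ i, ∑ j ∈ Finset.univ.erase i, extDiff (D i) (D j) := by
  have hpd : Set.PairwiseDisjoint (Finset.univ : Finset ι) D := fun i _ j _ hij => hD hij
  ext d
  simp only [Multiset.count_add, Multiset.count_sum', count_intDiff, count_extDiff,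
    Finset.sum_biUnion hpd]
  rw [← Finset.sum_add_distrib]
  refine Finset.sum_congr rfl fun i _ => ?_
  rw [Finset.sum_comm, ← Finset.add_sum_erase _ _ (Finset.mem_univ i), Finset.sum_comm]
  congr 1
  refine Finset.sum_congr rfl fun j hj => Finset.sum_congr rfl fun x hx =>
    Finset.sum_congr rfl fun y hy => ?_
  have hxy : x ≠ y := fun h =>
    Finset.disjoint_left.1 (hD (Finset.ne_of_mem_erase hj).symm) hx (h ▸ hy)
  simp [hxy]

theorem intDiff_four {a b c e : G} (hab : a ≠ b) (hac : a ≠ c) (hae : a ≠ e) (hbc : b ≠ c)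
    (hbe : b ≠ e) (hce : c ≠ e) :
    intDiff ({a, b, c, e} : Finset G) = pmPair (a - b) + pmPair (a - c) + pmPair (a - e) +
      pmPair (b - c) + pmPair (b - e) + pmPair (c - e) := by
  have ha : a ∉ ({b, c, e} : Finset G) := by simp [hab, hac, hae]
  have hb : b ∉ ({c, e} : Finset G) := by simp [hbc, hbe]
  have hc : c ∉ ({e} : Finset G) := by simp [hce]
  ext d
  simp only [count_intDiff, Finset.sum_insert ha, Finset.sum_insert hb, Finset.sum_insert hc,
    Finset.sum_singleton, pmPair, Multiset.count_add, Multiset.insert_eq_cons,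
    Multiset.count_cons, Multiset.count_singleton, neg_sub, ne_eq, hab, hac, hae, hbc, hbe, hce,
    Ne.symm hab, Ne.symm hac, Ne.symm hae, Ne.symm hbc, Ne.symm hbe, Ne.symm hce,
    not_false_eq_true, true_and, not_true_eq_false, false_and, if_false]
  ring

theorem sum_pmPair_of_reps {A R : Finset G} (hRA : R ⊆ A) (hneg : ∀ x ∈ A, -x ∈ A)
    (hA : ∀ x ∈ A, x ≠ -x) (hrep : ∀ x ∈ A, ∃! r, r ∈ R ∧ (x = r ∨ x = -r)) :
    ∑ r ∈ R, pmPair r = A.val := by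
  ext x
  have hcount : ∀ r ∈ R, (pmPair r).count x = if x = r ∨ x = -r then 1 else 0 := by
    intro r hr
    have := hA r (hRA hr)
    by_cases h1 : x = r
    · simp [pmPair, h1, this]
    · by_cases h2 : x = -r <;> simp [pmPair, h1, h2, this.symm]
  rw [Multiset.count_sum', Finset.sum_congr rfl hcount, Finset.sum_boole,
    Multiset.count_eq_of_nodup A.nodup]
  simp only [Finset.mem_val, Nat.cast_id]
  split_ifs with hx
  · obtain ⟨r, hr, huniq⟩ := hrep x hx
    rw [Finset.card_eq_one]
    exact ⟨r, Finset.eq_singleton_iff_unique_mem.2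
      ⟨Finset.mem_filter.2 hr, fun s hs => huniq s (Finset.mem_filter.1 hs)⟩⟩
  · rw [Finset.card_eq_zero, Finset.filter_eq_empty_iff]
    rintro r hr (rfl | rfl)
    exacts [hx (hRA hr), hx (hneg _ (hRA hr))]

variable [Fintype G]

theorem IsDPDF.isEPDF {ι : Type*} [Fintype ι] [DecidableEq ι] {D : ι → Finset G} {n m : ℕ}
    {k : ι → ℕ} {T : Finset G} {lam mu a b : ℕ} (hD : IsDPDF D n m k T lam mu)
    (hT : Finset.univ.biUnion D = T)
    (hΔ : intDiff T = (lam + a) • T.val + (mu + b) • (Gstar G \ T).val) :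
    IsEPDF D n m k T a b := by
  obtain ⟨hn, hm, h0, hk, hdisj, hsum⟩ := hD
  refine ⟨hn, hm, h0, hk, hdisj,
    add_left_cancel (a := lam • T.val + mu • (Gstar G \ T).val) ?_⟩
  rw [← hsum, ← intDiff_biUnion D hdisj, hT, hΔ, hsum, add_nsmul, add_nsmul]
  abel

theorem IsDPDF.le_of_intDiff_eq {ι : Type*} [Fintype ι] [DecidableEq ι] {D : ι → Finset G}
    {n m : ℕ} {k : ι → ℕ} {T : Finset G} {lam mu a b : ℕ} (hD : IsDPDF D n m k T lam mu)
    (hT : Finset.univ.biUnion D = T)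
    (hΔ : intDiff T = a • T.val + b • (Gstar G \ T).val) {t : G} (ht : t ∈ T) :
    lam ≤ a := by
  obtain ⟨-, -, -, -, hdisj, hsum⟩ := hD
  have hle : ∑ i, intDiff (D i) ≤ intDiff T := by
    rw [← hT, intDiff_biUnion D hdisj]
    exact le_add_right le_rfl
  have := Multiset.count_le_of_le t hle
  rwa [hsum, hΔ, Multiset.count_add, Multiset.count_add, Multiset.count_nsmul,
    Multiset.count_nsmul, Multiset.count_nsmul, Multiset.count_nsmul,
    Multiset.count_eq_one_of_mem T.nodup ht,
    Multiset.count_eq_zero_of_notMem fun h => (Finset.mem_sdiff.1 h).2 ht, mul_zero, mul_zero,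
    mul_one, mul_one, add_zero, add_zero] at this

end DifferenceMultisets

section Paley

variable {F : Type*} [Field F] [Fintype F]

theorem MulChar.IsQuadratic.sum_mul_add {R : Type*} [CommRing R] [IsDomain R] {χ : MulChar F R}
    (hχ : χ.IsQuadratic) (hχ1 : χ ≠ 1) {d : F} (hd : d ≠ 0) :
    ∑ y, χ y * χ (y + d) = -1 := by
  have hsq : ∀ {a : F}, a ≠ 0 → χ a ^ 2 = 1 := fun ha => by
    rw [← χ.pow_apply' two_ne_zero, hχ.sq_eq_one, MulChar.one_apply (isUnit_iff_ne_zero.2 ha)]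
  calc ∑ y, χ y * χ (y + d) = ∑ x, χ (-d * x) * χ (-d * x + d) :=
        (Fintype.sum_bijective _ (mulLeft_bijective₀ (-d) (neg_ne_zero.2 hd)) _ _
          fun _ => rfl).symm
    _ = χ (-1) * (χ d ^ 2 * jacobiSum χ χ) := by
        rw [jacobiSum, Finset.mul_sum, Finset.mul_sum]
        refine Finset.sum_congr rfl fun x _ => ?_
        rw [show -d * x + d = d * (1 - x) by ring, show -d * x = -1 * d * x by ring]
        simp only [map_mul]
        ring
    _ = -1 := by
        have hJ := jacobiSum_nontrivial_inv hχ1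
        rw [hχ.inv] at hJ
        rw [hJ, hsq hd]
        linear_combination -hsq (neg_ne_zero.2 (one_ne_zero (α := F)))

variable [DecidableEq F]

theorem four_mul_card_squares_add (hq : Fintype.card F % 4 = 1) {d : F} (hd : d ≠ 0) :
    4 * (#(Finset.univ.filter fun y : F =>
        quadraticChar F y = 1 ∧ quadraticChar F (y + d) = 1) : ℤ)
      = Fintype.card F - 3 - 2 * quadraticChar F d := by
  have hF : ringChar F ≠ 2 := fun h => by
    have := FiniteField.even_card_of_char_two h
    omega
  have hneg : ∀ x, quadraticChar F (-x) = quadraticChar F x := fun x => by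
    rw [neg_eq_neg_one_mul, map_mul, quadraticChar_neg_one hF, ZMod.χ₄_nat_one_mod_four hq,
      one_mul]
  have hpt : ∀ y, (1 + quadraticChar F y) * (1 + quadraticChar F (y + d)) =
      4 * (if quadraticChar F y = 1 ∧ quadraticChar F (y + d) = 1 then 1 else 0) +
        (if y = 0 then 1 + quadraticChar F d else 0) +
        (if y = -d then 1 + quadraticChar F d else 0) := fun y => by
    by_cases hy : y = 0
    · simp [hy, hd]
    by_cases hyd : y = -d
    · simp [hyd, hd, hneg]
    have hyd' : y + d ≠ 0 := fun h => hyd (eq_neg_of_add_eq_zero_left h)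
    rcases quadraticChar_dichotomy hy with h1 | h1 <;>
      rcases quadraticChar_dichotomy hyd' with h2 | h2 <;> simp [h1, h2, hy, hyd]
  have hsum : ∑ y, (1 + quadraticChar F y) * (1 + quadraticChar F (y + d)) =
      Fintype.card F - 1 := by
    have hshift : ∑ y, quadraticChar F (y + d) = 0 := by
      rw [← quadraticChar_sum_zero hF]
      exact Fintype.sum_equiv (Equiv.addRight d) _ _ fun _ => rfl
    simp only [add_mul, one_mul, mul_add, mul_one, Finset.sum_add_distrib, Finset.sum_const,
      Finset.card_univ, nsmul_eq_mul, quadraticChar_sum_zero hF, hshift,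
      (quadraticChar_isQuadratic F).sum_mul_add (quadraticChar_ne_one hF) hd]
    ring
  simp only [hpt, Finset.sum_add_distrib, ← Finset.mul_sum, Finset.sum_boole,
    Finset.sum_ite_eq', Finset.mem_univ, if_true] at hsum
  linear_combination hsum

theorem intDiff_squares (hq : Fintype.card F % 4 = 1) :
    intDiff (Finset.univ.filter fun x : F => quadraticChar F x = 1) =
      ((Fintype.card F - 5) / 4) • (Finset.univ.filter fun x : F => quadraticChar F x = 1).val +
      ((Fintype.card F - 1) / 4) •
        (Gstar F \ Finset.univ.filter fun x : F => quadraticChar F x = 1).val := by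
  ext d
  simp only [Multiset.count_add, Multiset.count_nsmul,
    Multiset.count_eq_of_nodup (Finset.nodup _), Finset.mem_val, Finset.mem_sdiff,
    Finset.mem_filter, Finset.mem_univ, true_and, Gstar, Finset.mem_erase, ne_eq, and_true]
  by_cases hd : d = 0
  · simp [hd, Multiset.count_eq_zero.2 (zero_notMem_intDiff _)]
  have hcount := four_mul_card_squares_add hq hd
  rw [count_intDiff_of_ne_zero _ hd, Finset.filter_filter]
  simp only [Finset.mem_filter, Finset.mem_univ, true_and]
  rcases quadraticChar_dichotomy hd with h | h <;> norm_num [h, hd] at hcount ⊢ <;> omega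

end Paley

section CyclotomicClasses

variable {F : Type*} [Field F] {α : F}

theorem IsPrimitiveElt.ne_zero (hα : IsPrimitiveElt α) (hF : ringChar F ≠ 2) : α ≠ 0 := by
  rintro rfl
  obtain ⟨n, hn⟩ := hα (-1) (neg_ne_zero.2 one_ne_zero)
  rcases n with _ | n
  · exact Ring.neg_one_ne_one_of_char_ne_two hF (by simpa using hn.symm)
  · simp at hn

variable [Fintype F]

theorem IsPrimitiveElt.isPrimitiveRoot (hα : IsPrimitiveElt α) (hα0 : α ≠ 0) :
    IsPrimitiveRoot α (Fintype.card F - 1) := by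
  classical
  have hgen : ∀ v : Fˣ, v ∈ Subgroup.zpowers (Units.mk0 α hα0) := fun v => by
    obtain ⟨n, hn⟩ := hα v v.ne_zero
    exact ⟨n, Units.ext (by simpa using hn)⟩
  have hord := orderOf_eq_card_of_forall_mem_zpowers hgen
  rw [Nat.card_eq_fintype_card, Fintype.card_units, ← orderOf_units, Units.val_mk0] at hord
  exact hord ▸ IsPrimitiveRoot.orderOf α

variable [DecidableEq F]

theorem mem_cycClass_iff (hα : IsPrimitiveElt α) (hα0 : α ≠ 0) {e i : ℕ}
    (he : e ∣ Fintype.card F - 1) (hi : i < e) {x : F} :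
    x ∈ cycClass α e i ↔
      x ^ ((Fintype.card F - 1) / e) = α ^ (i * ((Fintype.card F - 1) / e)) := by
  have hprim := hα.isPrimitiveRoot hα0
  obtain ⟨k, hk⟩ := he
  have hq := Fintype.one_lt_card (α := F)
  have hk0 : 0 < k := Nat.pos_of_ne_zero (by rintro rfl; omega)
  rw [hk, Nat.mul_div_cancel_left _ (by omega : 0 < e)]
  have hpow : ∀ a b, α ^ ((e * a + b) * k) = α ^ (b * k) := fun a b => by
    rw [add_mul, pow_add, mul_right_comm, ← hk, pow_mul, hprim.pow_eq_one, one_pow, one_mul]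
  constructor
  · rintro hx
    obtain ⟨j, -, rfl⟩ := Finset.mem_image.1 hx
    rw [← pow_mul, hpow]
  · intro hx
    have hx0 : x ≠ 0 := by
      rintro rfl
      rw [zero_pow hk0.ne'] at hx
      exact pow_ne_zero _ hα0 hx.symm
    obtain ⟨t, rfl⟩ := hα x hx0
    obtain ⟨s, hs_lt, hs⟩ : ∃ s < Fintype.card F - 1, α ^ t = α ^ s :=
      ⟨t % (Fintype.card F - 1), Nat.mod_lt _ (by omega),
        by rw [hprim.eq_orderOf, pow_mod_orderOf]⟩
    have hsi : s % e = i := by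
      rw [hs, ← pow_mul, ← Nat.div_add_mod s e, hpow] at hx
      refine Nat.eq_of_mul_eq_mul_right hk0 (hprim.pow_inj ?_ ?_ hx) <;> rw [hk]
      · exact Nat.mul_lt_mul_of_pos_right (Nat.mod_lt _ (by omega)) hk0
      · exact Nat.mul_lt_mul_of_pos_right hi hk0
    refine Finset.mem_image.2 ⟨s / e, Finset.mem_range.2 ?_, ?_⟩
    · exact lt_of_le_of_lt (Nat.div_le_self _ _) (by omega)
    · rw [hs, ← hsi, Nat.div_add_mod]

theorem cycClass_four_zero (hα : IsPrimitiveElt α) (hα0 : α ≠ 0)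
    (h4 : 4 ∣ Fintype.card F - 1) :
    cycClass α 4 0 = nthRootsFinset ((Fintype.card F - 1) / 4) (1 : F) := by
  have hpos : 0 < (Fintype.card F - 1) / 4 := by
    have := Fintype.one_lt_card (α := F)
    omega
  ext x
  rw [mem_cycClass_iff hα hα0 h4 four_pos, mem_nthRootsFinset hpos, zero_mul, pow_zero]

theorem cycClass_four_two (hα : IsPrimitiveElt α) (hα0 : α ≠ 0)
    (h4 : 4 ∣ Fintype.card F - 1) :
    cycClass α 4 2 = nthRootsFinset ((Fintype.card F - 1) / 4) (-1 : F) := by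
  have hpos : 0 < (Fintype.card F - 1) / 4 := by
    have := Fintype.one_lt_card (α := F)
    omega
  have hneg : α ^ (2 * ((Fintype.card F - 1) / 4)) = -1 :=
    ((hα.isPrimitiveRoot hα0).pow (by omega) (by omega)).eq_neg_one_of_two_right
  ext x
  rw [mem_cycClass_iff hα hα0 h4 (by norm_num), mem_nthRootsFinset hpos, hneg]

theorem quadraticChar_eq_one_iff_pow (hF : ringChar F ≠ 2) (x : F) :
    quadraticChar F x = 1 ↔ x ^ (Fintype.card F / 2) = 1 := by
  by_cases hx : x = 0
  · have : Fintype.card F / 2 ≠ 0 := (Nat.div_pos Fintype.one_lt_card two_pos).ne'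
    simp [hx, this]
  rw [quadraticChar_eq_pow_of_char_ne_two hF hx]
  split_ifs with h <;> simp [h]

theorem cycClass_two_zero (hα : IsPrimitiveElt α) (hα0 : α ≠ 0) (hF : ringChar F ≠ 2) :
    cycClass α 2 0 = Finset.univ.filter fun x => quadraticChar F x = 1 := by
  have hodd := FiniteField.odd_card_of_char_ne_two hF
  have h2 : 2 ∣ Fintype.card F - 1 := by omega
  ext x
  rw [mem_cycClass_iff hα hα0 h2 two_pos, Finset.mem_filter, quadraticChar_eq_one_iff_pow hF,
    zero_mul, pow_zero, show (Fintype.card F - 1) / 2 = Fintype.card F / 2 by omega]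
  simp

theorem filter_quadraticChar_eq_one_eq_union (hF : ringChar F ≠ 2)
    (h4 : 4 ∣ Fintype.card F - 1) :
    (Finset.univ.filter fun x => quadraticChar F x = 1) =
      nthRootsFinset ((Fintype.card F - 1) / 4) (1 : F) ∪
        nthRootsFinset ((Fintype.card F - 1) / 4) (-1 : F) := by
  have hpos : 0 < (Fintype.card F - 1) / 4 := by
    have := Fintype.one_lt_card (α := F)
    omega
  have hhalf : Fintype.card F / 2 = (Fintype.card F - 1) / 4 * 2 := by
    have := FiniteField.odd_card_of_char_ne_two hF
    omega
  ext x
  simp only [Finset.mem_filter, Finset.mem_univ, true_and, Finset.mem_union,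
    mem_nthRootsFinset hpos, quadraticChar_eq_one_iff_pow hF, hhalf, pow_mul, sq_eq_one_iff]

theorem two_pow_card_sub_one_div_four (hq : Fintype.card F % 8 = 1) :
    (2 : F) ^ ((Fintype.card F - 1) / 4) = 1 ∨ (2 : F) ^ ((Fintype.card F - 1) / 4) = -1 := by
  have hF : ringChar F ≠ 2 := fun h => by
    have := FiniteField.even_card_of_char_two h
    omega
  have h2 : (2 : F) ∈ Finset.univ.filter fun x => quadraticChar F x = 1 :=
    Finset.mem_filter.2 ⟨Finset.mem_univ _, (quadraticChar_one_iff_isSquare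
      (Ring.two_ne_zero hF)).2 (FiniteField.isSquare_two_iff.2 (by omega))⟩
  have hpos : 0 < (Fintype.card F - 1) / 4 := by
    have := Fintype.one_lt_card (α := F)
    omega
  rwa [filter_quadraticChar_eq_one_eq_union hF (by omega), Finset.mem_union,
    mem_nthRootsFinset hpos, mem_nthRootsFinset hpos] at h2

end CyclotomicClasses

section QuadFam

variable {F : Type*} [Field F] {m : ℕ} {γ : F} {R : Finset F}

theorem quadFam_distinct (hm0 : 0 < m) (hm : Even m) (hF : ringChar F ≠ 2) (hγ : γ ^ m = -1)
    (hR : R ⊆ nthRootsFinset m (1 : F)) (i : R) :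
    (i : F) ≠ -i ∧ (i : F) ≠ γ * i ∧ (i : F) ≠ -(γ * i) ∧ -(i : F) ≠ γ * i ∧
      -(i : F) ≠ -(γ * i) ∧ γ * (i : F) ≠ -(γ * i) := by
  have hne := Ring.neg_one_ne_one_of_char_ne_two hF
  have hi0 : (i : F) ≠ 0 := by
    intro h
    have := (mem_nthRootsFinset hm0 _).1 (hR i.2)
    simp [h, zero_pow hm0.ne'] at this
  have hγ0 : γ ≠ 0 := by rintro rfl; simp [zero_pow hm0.ne'] at hγ
  have hγ1 : 1 - γ ≠ 0 := fun h => hne (by rw [← hγ, ← sub_eq_zero.1 h, one_pow])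
  have hγm1 : 1 + γ ≠ 0 := fun h =>
    hne (by rw [← hγ, eq_neg_of_add_eq_zero_right h, hm.neg_one_pow])
  have h2 : (2 : F) ≠ 0 := Ring.two_ne_zero hF
  refine ⟨fun h => mul_ne_zero h2 hi0 (by linear_combination h),
    fun h => mul_ne_zero hγ1 hi0 (by linear_combination h),
    fun h => mul_ne_zero hγm1 hi0 (by linear_combination h),
    fun h => mul_ne_zero hγm1 hi0 (by linear_combination -h),
    fun h => mul_ne_zero hγ1 hi0 (by linear_combination -h),
    fun h => mul_ne_zero (mul_ne_zero h2 hγ0) hi0 (by linear_combination h)⟩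

variable [DecidableEq F]

theorem image_mul_nthRootsFinset_one (hm0 : 0 < m) {c : F} (hc : c ≠ 0) :
    (nthRootsFinset m (1 : F)).image (c * ·) = nthRootsFinset m (c ^ m) := by
  ext y
  simp only [Finset.mem_image, mem_nthRootsFinset hm0]
  constructor
  · rintro ⟨x, hx, rfl⟩
    rw [mul_pow, hx, mul_one]
  · intro hy
    refine ⟨c⁻¹ * y, ?_, mul_inv_cancel_left₀ hc y⟩
    rw [mul_pow, hy, inv_pow, inv_mul_cancel₀ (pow_ne_zero _ hc)]

theorem sum_pmPair_mul (hm0 : 0 < m) (hm : Even m) (hF : ringChar F ≠ 2)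
    (hR : R ⊆ nthRootsFinset m (1 : F))
    (hrep : ∀ x ∈ nthRootsFinset m (1 : F), ∃! r, r ∈ R ∧ (x = r ∨ x = -r))
    {c : F} (hc : c ≠ 0) :
    ∑ i : R, pmPair (c * i) = (nthRootsFinset m (c ^ m)).val := by
  have hpm : ∑ r ∈ R, pmPair r = (nthRootsFinset m (1 : F)).val := by
    refine sum_pmPair_of_reps hR (fun x hx => ?_) (fun x hx hxx => ?_) hrep <;>
      rw [mem_nthRootsFinset hm0] at hx
    · rwa [mem_nthRootsFinset hm0, hm.neg_pow]
    · have hx0 : x ≠ 0 := by rintro rfl; simp [hm0.ne'] at hx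
      have h2x : (2 : F) * x = 0 := by linear_combination hxx
      exact hx0 ((mul_eq_zero.1 h2x).resolve_left (Ring.two_ne_zero hF))
  calc ∑ i : R, pmPair (c * i) = ∑ i : R, (pmPair (i : F)).map (c * ·) := by
        simp [pmPair, mul_neg]
    _ = (∑ r ∈ R, pmPair r).map (c * ·) := by
        rw [← Finset.sum_coe_sort R]
        exact (map_sum (Multiset.mapAddMonoidHom (c * ·)) (fun i : R => pmPair (i : F)) _).symm
    _ = ((nthRootsFinset m (1 : F)).image (c * ·)).val := by
        rw [hpm, Finset.image_val_of_injOn (mul_right_injective₀ hc).injOn]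
    _ = (nthRootsFinset m (c ^ m)).val := by rw [image_mul_nthRootsFinset_one hm0 hc]

theorem sum_pmPair_mul_add_sum_pmPair_mul (hm0 : 0 < m) (hm : Even m) (hF : ringChar F ≠ 2)
    (hR : R ⊆ nthRootsFinset m (1 : F))
    (hrep : ∀ x ∈ nthRootsFinset m (1 : F), ∃! r, r ∈ R ∧ (x = r ∨ x = -r))
    {c₁ c₂ : F}
    (hc : (c₁ ^ m = 1 ∧ c₂ ^ m = -1) ∨ (c₁ ^ m = -1 ∧ c₂ ^ m = 1)) :
    ∑ i : R, pmPair (c₁ * i) + ∑ i : R, pmPair (c₂ * i) =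
      (nthRootsFinset m (1 : F) ∪ nthRootsFinset m (-1 : F)).val := by
  have hne : ∀ {c : F}, (c ^ m = 1 ∨ c ^ m = -1) → c ≠ 0 := by
    rintro c hc rfl
    simp [zero_pow hm0.ne'] at hc
  have hdisj : Disjoint (nthRootsFinset m (1 : F)) (nthRootsFinset m (-1 : F)) := by
    refine Finset.disjoint_left.2 fun x h1 h2 => Ring.neg_one_ne_one_of_char_ne_two hF ?_
    rw [mem_nthRootsFinset hm0] at h1 h2
    exact h2.symm.trans h1
  rw [← Finset.disjUnion_eq_union _ _ hdisj, Finset.disjUnion_val]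
  rcases hc with ⟨h1, h2⟩ | ⟨h1, h2⟩
  · rw [sum_pmPair_mul hm0 hm hF hR hrep (hne (Or.inl h1)),
      sum_pmPair_mul hm0 hm hF hR hrep (hne (Or.inr h2)), h1, h2]
  · rw [sum_pmPair_mul hm0 hm hF hR hrep (hne (Or.inr h1)),
      sum_pmPair_mul hm0 hm hF hR hrep (hne (Or.inl h2)), h1, h2, add_comm]

variable [Fintype F]

theorem mem_quadFam_cases (hm0 : 0 < m) (hm : Even m) (hγ : γ ^ m = -1)
    (hR : R ⊆ nthRootsFinset m (1 : F)) {i : R} {t : F} (ht : t ∈ quadFam γ R i) :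
    (t ^ m = 1 ∧ (t = i ∨ t = -i)) ∨
      (t ^ m = -1 ∧ (γ⁻¹ * t = i ∨ γ⁻¹ * t = -i)) := by
  have hi : (i : F) ^ m = 1 := (mem_nthRootsFinset hm0 _).1 (hR i.2)
  have hγ0 : γ ≠ 0 := by rintro rfl; simp [zero_pow hm0.ne'] at hγ
  simp only [quadFam, Finset.mem_insert, Finset.mem_singleton] at ht
  rcases ht with rfl | rfl | rfl | rfl
  · exact Or.inl ⟨hi, Or.inl rfl⟩
  · exact Or.inl ⟨by rw [hm.neg_pow, hi], Or.inr rfl⟩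
  · exact Or.inr ⟨by rw [mul_pow, hγ, hi, neg_one_mul],
      Or.inl (inv_mul_cancel_left₀ hγ0 _)⟩
  · exact Or.inr ⟨by rw [hm.neg_pow, mul_pow, hγ, hi, neg_one_mul],
      Or.inr (by rw [mul_neg, inv_mul_cancel_left₀ hγ0])⟩

theorem quadFam_pairwiseDisjoint (hm0 : 0 < m) (hm : Even m) (hF : ringChar F ≠ 2)
    (hγ : γ ^ m = -1) (hR : R ⊆ nthRootsFinset m (1 : F))
    (hrep : ∀ x ∈ nthRootsFinset m (1 : F), ∃! r, r ∈ R ∧ (x = r ∨ x = -r)) :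
    Pairwise fun i j : R => Disjoint (quadFam γ R i) (quadFam γ R j) := by
  have hne := Ring.neg_one_ne_one_of_char_ne_two hF
  intro i j hij
  refine Finset.disjoint_left.2 fun t hti htj => hij (Subtype.ext ?_)
  rcases mem_quadFam_cases hm0 hm hγ hR hti with ⟨h1, hi⟩ | ⟨h1, hi⟩ <;>
    rcases mem_quadFam_cases hm0 hm hγ hR htj with ⟨h2, hj⟩ | ⟨h2, hj⟩
  · exact (hrep t ((mem_nthRootsFinset hm0 _).2 h1)).unique ⟨i.2, hi⟩ ⟨j.2, hj⟩
  · exact absurd (h2.symm.trans h1) hne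
  · exact absurd (h1.symm.trans h2) hne
  · have hs : (γ⁻¹ * t) ^ m = 1 := by
      rw [mul_pow, inv_pow, hγ, h1, inv_mul_cancel₀ (neg_ne_zero.2 one_ne_zero)]
    exact (hrep _ ((mem_nthRootsFinset hm0 _).2 hs)).unique ⟨i.2, hi⟩ ⟨j.2, hj⟩

theorem biUnion_quadFam (hm0 : 0 < m) (hm : Even m) (hγ : γ ^ m = -1)
    (hR : R ⊆ nthRootsFinset m (1 : F))
    (hrep : ∀ x ∈ nthRootsFinset m (1 : F), ∃! r, r ∈ R ∧ (x = r ∨ x = -r)) :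
    Finset.univ.biUnion (quadFam γ R) =
      nthRootsFinset m (1 : F) ∪ nthRootsFinset m (-1 : F) := by
  have hγ0 : γ ≠ 0 := by rintro rfl; simp [zero_pow hm0.ne'] at hγ
  ext t
  simp only [Finset.mem_biUnion, Finset.mem_univ, true_and, Finset.mem_union,
    mem_nthRootsFinset hm0]
  constructor
  · rintro ⟨i, hi⟩
    rcases mem_quadFam_cases hm0 hm hγ hR hi with ⟨h, -⟩ | ⟨h, -⟩
    exacts [Or.inl h, Or.inr h]
  · rintro (h | h)
    · obtain ⟨r, ⟨hr, hrt⟩, -⟩ := hrep t ((mem_nthRootsFinset hm0 _).2 h)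
      refine ⟨⟨r, hr⟩, ?_⟩
      rcases hrt with rfl | rfl <;> simp [quadFam]
    · have hs : (γ⁻¹ * t) ^ m = 1 := by
        rw [mul_pow, inv_pow, hγ, h, inv_mul_cancel₀ (neg_ne_zero.2 one_ne_zero)]
      obtain ⟨r, ⟨hr, hrt⟩, -⟩ := hrep _ ((mem_nthRootsFinset hm0 _).2 hs)
      refine ⟨⟨r, hr⟩, ?_⟩
      have ht : t = γ * (γ⁻¹ * t) := (mul_inv_cancel_left₀ hγ0 t).symm
      rcases hrt with h' | h' <;> rw [ht, h'] <;> simp [quadFam]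

theorem zero_notMem_quadFam (hm0 : 0 < m) (hm : Even m) (hγ : γ ^ m = -1)
    (hR : R ⊆ nthRootsFinset m (1 : F)) (i : R) : (0 : F) ∉ quadFam γ R i := fun h => by
  rcases mem_quadFam_cases hm0 hm hγ hR h with ⟨h0, -⟩ | ⟨h0, -⟩ <;>
    simp [zero_pow hm0.ne'] at h0

theorem card_quadFam (hm0 : 0 < m) (hm : Even m) (hF : ringChar F ≠ 2) (hγ : γ ^ m = -1)
    (hR : R ⊆ nthRootsFinset m (1 : F)) (i : R) : #(quadFam γ R i) = 4 := by
  obtain ⟨h1, h2, h3, h4, h5, h6⟩ := quadFam_distinct hm0 hm hF hγ hR i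
  exact Finset.card_eq_four.2 ⟨_, _, _, _, h1, h2, h3, h4, h5, h6, rfl⟩

theorem intDiff_quadFam (hm0 : 0 < m) (hm : Even m) (hF : ringChar F ≠ 2) (hγ : γ ^ m = -1)
    (hR : R ⊆ nthRootsFinset m (1 : F)) (i : R) :
    intDiff (quadFam γ R i) = pmPair (2 * (i : F)) + pmPair (2 * γ * i) +
      2 • (pmPair ((1 - γ) * i) + pmPair ((1 + γ) * i)) := by
  obtain ⟨h1, h2, h3, h4, h5, h6⟩ := quadFam_distinct hm0 hm hF hγ hR i
  rw [quadFam, intDiff_four h1 h2 h3 h4 h5 h6, show (i : F) - -i = 2 * i by ring,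
    show (i : F) - γ * i = (1 - γ) * i by ring, show (i : F) - -(γ * i) = (1 + γ) * i by ring,
    show -(i : F) - γ * i = -((1 + γ) * i) by ring,
    show -(i : F) - -(γ * i) = -((1 - γ) * i) by ring,
    show γ * (i : F) - -(γ * i) = 2 * γ * i by ring, pmPair_neg, pmPair_neg, two_nsmul]
  ac_rfl

theorem isDPDF_quadFam (hm0 : 0 < m) (hm : Even m) (hF : ringChar F ≠ 2) (hγ : γ ^ m = -1)
    (hR : R ⊆ nthRootsFinset m (1 : F))
    (hrep : ∀ x ∈ nthRootsFinset m (1 : F), ∃! r, r ∈ R ∧ (x = r ∨ x = -r))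
    (h2 : (2 : F) ^ m = 1 ∨ (2 : F) ^ m = -1)
    (hγpm : ((1 - γ) ^ m = 1 ∧ (1 + γ) ^ m = -1) ∨
      ((1 - γ) ^ m = -1 ∧ (1 + γ) ^ m = 1)) :
    IsDPDF (quadFam γ R) (Fintype.card F) (#(nthRootsFinset m (1 : F)) / 2) (fun _ => 4)
      (nthRootsFinset m (1 : F) ∪ nthRootsFinset m (-1 : F)) 3 0 := by
  have h2γ : ((2 : F) ^ m = 1 ∧ (2 * γ) ^ m = -1) ∨
      ((2 : F) ^ m = -1 ∧ (2 * γ) ^ m = 1) := by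
    rcases h2 with h | h
    · exact Or.inl ⟨h, by rw [mul_pow, h, hγ, one_mul]⟩
    · exact Or.inr ⟨h, by rw [mul_pow, h, hγ, neg_one_mul, neg_neg]⟩
  have hcard : 2 * #R = #(nthRootsFinset m (1 : F)) := by
    have h := congrArg Multiset.card (sum_pmPair_mul hm0 hm hF hR hrep one_ne_zero)
    simpa [pmPair, mul_comm] using h
  refine ⟨rfl, by rw [Fintype.card_coe]; omega, zero_notMem_quadFam hm0 hm hγ hR,
    card_quadFam hm0 hm hF hγ hR, quadFam_pairwiseDisjoint hm0 hm hF hγ hR hrep, ?_⟩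
  simp only [intDiff_quadFam hm0 hm hF hγ hR, Finset.sum_add_distrib, ← Finset.smul_sum]
  rw [sum_pmPair_mul_add_sum_pmPair_mul hm0 hm hF hR hrep h2γ,
    sum_pmPair_mul_add_sum_pmPair_mul hm0 hm hF hR hrep hγpm, zero_smul, add_zero]
  abel

end QuadFam

/-- Let `q ≡ 1 (mod 8)` be a prime power, `γ ∈ C_2^4`, and `R ⊆ C_0^4` a
set of coset representatives for `C_0^4 / {1, -1}`.  For `i ∈ R` set
`D_i = {i, -i, γi, -γi}`.  If one of `1 - γ` and `1 + γ` lies in `C_0^4` while the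
other lies in `C_2^4`, then the `D_i` are pairwise disjoint with `∪ D_i = C_0^2`, and
`D = {D_i : i ∈ R}` is a `(q,(q-1)/8,4;3,0)`-DPDF relative to `C_0^2` (i.e.
`∑ Δ(D_i) = 3 • C_0^2`) and a `(q,(q-1)/8,4;(q-17)/4,(q-1)/4)`-EPDF relative to
`C_0^2` (a standard DPDF and EPDF partitioning `C_0^2`). -/
theorem stmt_19 {F : Type*} [Field F] [Fintype F] [DecidableEq F]
    (q : ℕ) (hq : Fintype.card F = q) (hq8 : q % 8 = 1)
    (α : F) (hα : IsPrimitiveElt α)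
    (γ : F) (hγ : γ ∈ cycClass α 4 2)
    (R : Finset F) (hR : R ⊆ cycClass α 4 0)
    (hrep : ∀ x ∈ cycClass α 4 0, ∃! r, r ∈ R ∧ (x = r ∨ x = -r))
    (hγpm : (1 - γ ∈ cycClass α 4 0 ∧ 1 + γ ∈ cycClass α 4 2) ∨
      (1 - γ ∈ cycClass α 4 2 ∧ 1 + γ ∈ cycClass α 4 0)) :
    (Pairwise (fun i j : {x : F // x ∈ R} =>
      Disjoint (quadFam γ R i) (quadFam γ R j))) ∧
    Finset.univ.biUnion (quadFam γ R) = cycClass α 2 0 ∧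
    IsDPDF (quadFam γ R) q ((q - 1) / 8) (fun _ => 4) (cycClass α 2 0) 3 0 ∧
    (∃ lam : ℕ, 4 * (lam : ℤ) = (q : ℤ) - 17 ∧
      IsEPDF (quadFam γ R) q ((q - 1) / 8) (fun _ => 4) (cycClass α 2 0)
        lam ((q - 1) / 4)) := by
  subst hq
  have hF : ringChar F ≠ 2 := fun h => by
    have := FiniteField.even_card_of_char_two h
    omega
  have hα0 := hα.ne_zero hF
  have hq1 : 1 < Fintype.card F := Fintype.one_lt_card
  have h4 : 4 ∣ Fintype.card F - 1 := by omega
  rw [cycClass_four_zero hα hα0 h4] at hR hrep hγpm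
  rw [cycClass_four_two hα hα0 h4] at hγ hγpm
  rw [cycClass_two_zero hα hα0 hF, filter_quadraticChar_eq_one_eq_union hF h4]
  set m := (Fintype.card F - 1) / 4
  have hm0 : 0 < m := by omega
  have hm : Even m := ⟨(Fintype.card F - 1) / 8, by omega⟩
  simp only [mem_nthRootsFinset hm0] at hγ hγpm
  have hDPDF := isDPDF_quadFam hm0 hm hF hγ hR hrep (two_pow_card_sub_one_div_four hq8) hγpm
  rw [((hα.isPrimitiveRoot hα0).pow (by omega) (by omega : _ = 4 * m)).card_nthRootsFinset,
    Nat.div_div_eq_div_mul] at hDPDF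
  have hunion := biUnion_quadFam hm0 hm hγ hR hrep
  have hPaley := intDiff_squares (F := F) (by omega)
  rw [filter_quadraticChar_eq_one_eq_union hF h4] at hPaley
  have h17 := hDPDF.le_of_intDiff_eq hunion hPaley (t := 1) (by simp [mem_nthRootsFinset hm0])
  refine ⟨quadFam_pairwiseDisjoint hm0 hm hF hγ hR hrep, hunion, hDPDF,
    (Fintype.card F - 17) / 4, by omega, hDPDF.isEPDF hunion ?_⟩
  rw [hPaley]
  congr 2 <;> omega
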